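/- Let (E,T,S,e) be a conditional expectation preserving system with E = 𝓔_S. Then (E,T,S,e) is ergodic if and only if T = L_S. -/

import Mathlib

open Finset

/- `E` is a Riesz space (real vector lattice). -/
variable {E : Type*} [AddCommGroup E] [Lattice E]
  [CovariantClass E E (· + ·) (· ≤ ·)] [Module ℝ E] [PosSMulMono ℝ E]

/-- A sequence `u` in `E` order converges to `l` if there is a sequence `p` decreasing to `0`
with `|u n - l| ≤ p n` for all `n`. -/
def OrderConv (u : ℕ → E) (l : E) : Prop :=
  ∃ p : ℕ → E, Antitone p ∧ IsGLB (Set.range p) 0 ∧ ∀ n, |u n - l| ≤ p n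

/-- `l` is the greatest lower bound of `A` relative to the subset `F`. -/
def IsGLBIn (F A : Set E) (l : E) : Prop :=
  (∀ a ∈ A, l ≤ a) ∧ ∀ b ∈ F, (∀ a ∈ A, b ≤ a) → b ≤ l

/-- `F` is Dedekind complete (in its induced order): every nonempty subset of `F`
bounded above in `F` has a supremum in `F`. -/
def DedekindCompleteIn (F : Set E) : Prop :=
  ∀ A : Set E, A ⊆ F → A.Nonempty → (∃ b ∈ F, ∀ a ∈ A, a ≤ b) →
    ∃ s ∈ F, (∀ a ∈ A, a ≤ s) ∧ ∀ b ∈ F, (∀ a ∈ A, a ≤ b) → s ≤ b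

/-- `u` is a weak order unit of (the Riesz subspace) `F`:  `u > 0` and the band generated by
`u` is everything, equivalently no nonzero positive element of `F` is disjoint from `u`. -/
def IsWeakOrderUnitIn (F : Set E) (u : E) : Prop :=
  0 < u ∧ ∀ f ∈ F, 0 ≤ f → f ⊓ u = 0 → f = 0

/-- Band projections on a Riesz space: the linear idempotents `P` with `0 ≤ P ≤ I`. -/
def IsBandProjection (P : E →ₗ[ℝ] E) : Prop :=
  (∀ f, P (P f) = P f) ∧ ∀ f, 0 ≤ f → 0 ≤ P f ∧ P f ≤ f

/-- `L` (restricted to `F`) is a conditional expectation operator on `F`: a positive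
order continuous linear projection whose range is a Dedekind complete Riesz subspace and
which maps weak order units to weak order units. -/
def IsCondExpOn (F : Set E) (L : E → E) : Prop :=
  (∀ f ∈ F, L f ∈ F) ∧
  (∀ f ∈ F, ∀ g ∈ F, L (f + g) = L f + L g) ∧
  (∀ r : ℝ, ∀ f ∈ F, L (r • f) = r • L f) ∧
  (∀ f ∈ F, 0 ≤ f → 0 ≤ L f) ∧
  (∀ A : Set E, A ⊆ F → A.Nonempty → DirectedOn (· ≥ ·) A → IsGLBIn F A 0 →
      IsGLBIn F (L '' A) 0) ∧
  (∀ f ∈ F, L (L f) = L f) ∧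
  (∀ f ∈ L '' F, ∀ g ∈ L '' F, f ⊔ g ∈ L '' F) ∧
  DedekindCompleteIn (L '' F) ∧
  (∀ u ∈ F, IsWeakOrderUnitIn F u → IsWeakOrderUnitIn F (L u))

/-- Order continuity of a positive operator: downward directed sets with infimum `0`
are mapped to sets with infimum `0`. -/
def OrderContinuousOp (S : E →ₗ[ℝ] E) : Prop :=
  ∀ A : Set E, A.Nonempty → DirectedOn (· ≥ ·) A → IsGLB A 0 → IsGLB (S '' A) 0

/-- Riesz homomorphism: a linear map preserving the lattice operations. -/
def IsRieszHom (S : E →ₗ[ℝ] E) : Prop := ∀ f g, S (f ⊔ g) = S f ⊔ S g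

/-- `(E,T,S,e)` is a conditional expectation preserving system: `E` is a Dedekind complete
Riesz space with weak order unit `e`, `T` a conditional expectation operator on `E` with
`Te = e`, and `S` an order continuous Riesz homomorphism with `Se = e` and `TSPe = TPe`
for every band projection `P` on `E`. -/
def IsCEPS (T S : E →ₗ[ℝ] E) (e : E) : Prop :=
  DedekindCompleteIn (Set.univ : Set E) ∧
  IsWeakOrderUnitIn (Set.univ : Set E) e ∧
  IsCondExpOn Set.univ T ∧ T e = e ∧
  IsRieszHom S ∧ OrderContinuousOp S ∧ S e = e ∧
  ∀ P : E →ₗ[ℝ] E, IsBandProjection P → T (S (P e)) = T (P e)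

/-- The Cesàro means `S_n f = (1/n) ∑_{k=0}^{n-1} S^k f`. -/
noncomputable def ces (S : E →ₗ[ℝ] E) (f : E) (n : ℕ) : E :=
  (n : ℝ)⁻¹ • ∑ k ∈ Finset.range n, (S ^ k) f

/-- The principal ideal `E_e` generated by `e`. -/
def idealE (e : E) : Set E := {f : E | ∃ k : ℝ, 0 ≤ k ∧ |f| ≤ k • e}

/-- The system `(E,T,S,e)` is ergodic if `L_S f ∈ R(T)` for every `S`-invariant `f`
(where `L_S f` is any order limit of the Cesàro means of `f`). -/
def IsErgodic (T S : E →ₗ[ℝ] E) (e : E) : Prop :=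
  ∀ f l : E, S f = f → OrderConv (ces S f) l → l ∈ Set.range T


/-!
The Cesàro limit `L_S f` is `S`-invariant, because `S (S_n f) - S_n f = (S^n f - f) / n`; its
own Cesàro means are therefore eventually constant, and ergodicity puts it in `R(T)`, so
`T (L_S f) = L_S f`. Moreover `T S = T`. On `[0, e]` this follows from `T S P e = T P e`, since
each `0 ≤ f ≤ e` lies between two elements of the span of the `P e`, `P` a band projection, that
differ by at most `e / n` (Freudenthal); it extends to `E` by order continuity, `e` being a weak
order unit. Hence `T (S_n f) = T f`, and order continuity of `T` gives
`T f = T (L_S f) = L_S f`. Conversely, if `T = L_S` every Cesàro limit lies in `R(T)`.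
-/

section LatticeOrderedGroup

variable {G : Type*} [AddCommGroup G] [Lattice G] [AddLeftMono G]

instance : IsOrderedAddMonoid G where
  add_le_add_left _ _ h c := add_le_add_left h c

lemma isGLBIn_univ_iff {α : Type*} [Lattice α] {A : Set α} {l : α} :
    IsGLBIn Set.univ A l ↔ IsGLB A l :=
  ⟨fun h => ⟨h.1, fun b hb => h.2 b trivial hb⟩, fun h => ⟨h.1, fun _ _ hb => h.2 hb⟩⟩

lemma DedekindCompleteIn.exists_isLUB {α : Type*} [Lattice α]
    (h : DedekindCompleteIn (Set.univ : Set α)) {A : Set α} (hne : A.Nonempty)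
    (hA : BddAbove A) : ∃ s, IsLUB A s := by
  obtain ⟨b, hb⟩ := hA
  obtain ⟨s, -, hub, hle⟩ := h A (Set.subset_univ A) hne ⟨b, trivial, hb⟩
  exact ⟨s, hub, fun c hc => hle c trivial hc⟩

lemma DedekindCompleteIn.eq_zero_of_forall_nsmul_le (hDC : DedekindCompleteIn (Set.univ : Set G))
    {x y : G} (hx : 0 ≤ x) (h : ∀ n : ℕ, n • x ≤ y) : x = 0 := by
  obtain ⟨s, hs⟩ := hDC.exists_isLUB (Set.range_nonempty fun n : ℕ => n • x)
    ⟨y, Set.forall_mem_range.2 h⟩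
  have hss : s ≤ s - x := hs.2 <| Set.forall_mem_range.2 fun n =>
    le_sub_iff_add_le.2 <| by simpa [succ_nsmul] using hs.1 (Set.mem_range_self (n + 1))
  exact le_antisymm (by simpa using hss) hx

lemma eq_zero_of_abs_nonpos {x : G} (h : |x| ≤ 0) : x = 0 :=
  le_antisymm ((le_abs_self x).trans h) (neg_nonpos.1 ((neg_le_abs x).trans h))

lemma abs_sub_le_add_of_nonneg {a b : G} (ha : 0 ≤ a) (hb : 0 ≤ b) : |a - b| ≤ a + b :=
  abs_le'.2 ⟨(sub_le_self a hb).trans (le_add_of_nonneg_right hb),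
    by rw [neg_sub]; exact (sub_le_self b ha).trans (le_add_of_nonneg_left ha)⟩

lemma inf_add_le_add_inf {x y c : G} (hx : 0 ≤ x) (hy : 0 ≤ y) (hc : 0 ≤ c) :
    (x + y) ⊓ c ≤ x ⊓ c + y ⊓ c := by
  rw [inf_add, add_inf, add_inf]
  exact le_inf (le_inf inf_le_left (inf_le_right.trans (le_add_of_nonneg_left hx)))
    (le_inf (inf_le_right.trans (le_add_of_nonneg_right hy))
      (inf_le_right.trans (le_add_of_nonneg_left hc)))

end LatticeOrderedGroup

section OrderConvergence

/-- `p n ↓ 0`: the sequences that witness order convergence. -/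
def DecrToZero {α : Type*} [Preorder α] [Zero α] (p : ℕ → α) : Prop :=
  Antitone p ∧ IsGLB (Set.range p) 0

variable {G : Type*} [AddCommGroup G] [Lattice G]

namespace DecrToZero

variable {p q : ℕ → G}

lemma nonneg (hp : DecrToZero p) (n : ℕ) : 0 ≤ p n := hp.2.1 ⟨n, rfl⟩

lemma le_zero (hp : DecrToZero p) {x : G} (hx : ∀ n, x ≤ p n) : x ≤ 0 :=
  hp.2.2 (Set.forall_mem_range.2 hx)

lemma const_zero : DecrToZero (fun _ => (0 : G)) :=
  ⟨antitone_const, by simp⟩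

variable [AddLeftMono G]

lemma eq_zero (hp : DecrToZero p) {x : G} (hx : ∀ n, |x| ≤ p n) : x = 0 :=
  eq_zero_of_abs_nonpos (hp.le_zero hx)

lemma add (hp : DecrToZero p) (hq : DecrToZero q) : DecrToZero (fun n => p n + q n) := by
  refine ⟨fun n m hnm => add_le_add (hp.1 hnm) (hq.1 hnm),
    Set.forall_mem_range.2 fun n => add_nonneg (hp.nonneg n) (hq.nonneg n), fun b hb => ?_⟩
  have hbq : ∀ m, b - q m ≤ 0 := fun m => hp.le_zero fun n => sub_le_iff_le_add.2 <|
    (hb ⟨n ⊔ m, rfl⟩).trans (add_le_add (hp.1 le_sup_left) (hq.1 le_sup_right))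
  exact hq.le_zero fun m => sub_nonpos.1 (hbq m)

lemma sub_inf_nsmul (hDC : DedekindCompleteIn (Set.univ : Set G)) {e f : G}
    (he : IsWeakOrderUnitIn Set.univ e) (hf : 0 ≤ f) :
    DecrToZero (fun m : ℕ => f - f ⊓ m • e) := by
  refine ⟨fun n m hnm => sub_le_sub_left (inf_le_inf_left f
      (nsmul_le_nsmul_left he.1.le hnm)) f,
    Set.forall_mem_range.2 fun m => sub_nonneg.2 inf_le_left, fun b hb => ?_⟩
  have hb' : ∀ m : ℕ, b⁺ ≤ f - f ⊓ m • e := fun m =>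
    sup_le (hb ⟨m, rfl⟩) (sub_nonneg.2 inf_le_left)
  -- `f ⊓ m • e` grows by at least `b⁺ ⊓ e` at each step while staying below `f`
  have hstep : ∀ m : ℕ, m • (b⁺ ⊓ e) ≤ f ⊓ m • e := by
    intro m
    induction m with
    | zero => simpa using hf
    | succ m ih =>
      rw [succ_nsmul, succ_nsmul]
      refine le_inf ?_ (add_le_add (ih.trans inf_le_right) inf_le_right)
      calc m • (b⁺ ⊓ e) + b⁺ ⊓ e ≤ f ⊓ m • e + b⁺ := add_le_add ih inf_le_left
        _ ≤ f := by rw [add_comm, ← le_sub_iff_add_le]; exact hb' m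
  have hbe : b⁺ ⊓ e = 0 := hDC.eq_zero_of_forall_nsmul_le (le_inf (posPart_nonneg b) he.1.le)
    fun m => (hstep m).trans inf_le_left
  exact (le_posPart b).trans (he.2 b⁺ trivial (posPart_nonneg b) hbe).le

end DecrToZero

namespace OrderConv

variable {u v : ℕ → G} {l l' : G}

lemma of_decrToZero {p : ℕ → G} (hp : DecrToZero p) (h : ∀ n, |u n - l| ≤ p n) :
    OrderConv u l :=
  ⟨p, hp.1, hp.2, h⟩

lemma exists_decrToZero (h : OrderConv u l) : ∃ p, DecrToZero p ∧ ∀ n, |u n - l| ≤ p n :=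
  let ⟨p, hp₁, hp₂, h⟩ := h; ⟨p, ⟨hp₁, hp₂⟩, h⟩

lemma comp_succ (h : OrderConv u l) : OrderConv (fun n => u (n + 1)) l := by
  obtain ⟨p, hp, hpu⟩ := h.exists_decrToZero
  exact of_decrToZero hp fun n => (hpu (n + 1)).trans (hp.1 n.le_succ)

variable [AddLeftMono G]

lemma const (a : G) : OrderConv (fun _ => a) a :=
  of_decrToZero DecrToZero.const_zero fun _ => by simp

lemma unique (h : OrderConv u l) (h' : OrderConv u l') : l = l' := by
  obtain ⟨p, hp, hpu⟩ := h.exists_decrToZero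
  obtain ⟨q, hq, hqu⟩ := h'.exists_decrToZero
  refine sub_eq_zero.1 <| (hp.add hq).eq_zero fun n => ?_
  calc |l - l'| = |(l - u n) + (u n - l')| := by rw [sub_add_sub_cancel]
    _ ≤ p n + q n :=
      (abs_add_le _ _).trans (add_le_add ((abs_sub_comm _ _).trans_le (hpu n)) (hqu n))

lemma add (hu : OrderConv u l) (hv : OrderConv v l') :
    OrderConv (fun n => u n + v n) (l + l') := by
  obtain ⟨p, hp, hpu⟩ := hu.exists_decrToZero
  obtain ⟨q, hq, hqv⟩ := hv.exists_decrToZero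
  refine of_decrToZero (hp.add hq) fun n => ?_
  calc |u n + v n - (l + l')| = |(u n - l) + (v n - l')| := by congr 1; abel
    _ ≤ p n + q n := (abs_add_le _ _).trans (add_le_add (hpu n) (hqv n))

lemma of_comp_succ (h : OrderConv (fun n => u (n + 1)) l) : OrderConv u l := by
  obtain ⟨p, hp, hpu⟩ := h.exists_decrToZero
  let q : ℕ → G := fun
    | 0 => p 0 + |u 0 - l|
    | n + 1 => p n
  have hq : DecrToZero q := by
    refine ⟨antitone_nat_of_succ_le fun n => ?_, ?_,
      fun b hb => hp.le_zero fun n => hb ⟨n + 1, rfl⟩⟩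
    · cases n with
      | zero => exact le_add_of_nonneg_right (abs_nonneg _)
      | succ n => exact hp.1 n.le_succ
    · rintro _ ⟨_ | n, rfl⟩
      · exact add_nonneg (hp.nonneg 0) (abs_nonneg _)
      · exact hp.nonneg n
  refine of_decrToZero hq fun n => ?_
  cases n with
  | zero => exact le_add_of_nonneg_left (hp.nonneg 0)
  | succ n => exact hpu n

end OrderConv

end OrderConvergence

section PositiveOperators

variable {G : Type*} [AddCommGroup G] [Lattice G] [Module ℝ G]

lemma abs_map_le {A : G →ₗ[ℝ] G} (hA : Monotone A) (x : G) : |A x| ≤ A |x| :=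
  abs_le'.2 ⟨hA (le_abs_self x), by rw [← map_neg]; exact hA (neg_le_abs x)⟩

lemma abs_smul_le_smul_abs [PosSMulMono ℝ G] {r : ℝ} (hr : 0 ≤ r) (x : G) : |r • x| ≤ r • |x| :=
  abs_le'.2 ⟨smul_le_smul_of_nonneg_left (le_abs_self x) hr,
    by rw [← smul_neg]; exact smul_le_smul_of_nonneg_left (neg_le_abs x) hr⟩

lemma IsCondExpOn.orderContinuousOp {T : G →ₗ[ℝ] G} (hT : IsCondExpOn Set.univ T) :
    OrderContinuousOp T := fun A hne hdir hA =>
  isGLBIn_univ_iff.1 <| hT.2.2.2.2.1 A (Set.subset_univ A) hne hdir (isGLBIn_univ_iff.2 hA)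

lemma IsCondExpOn.map_idem {T : G →ₗ[ℝ] G} (hT : IsCondExpOn Set.univ T) (x : G) :
    T (T x) = T x :=
  hT.2.2.2.2.2.1 x trivial

lemma OrderContinuousOp.comp {T S : G →ₗ[ℝ] G} (hT : OrderContinuousOp T)
    (hSm : Monotone S) (hS : OrderContinuousOp S) : OrderContinuousOp (T ∘ₗ S) := by
  intro A hne hdir hA
  rw [LinearMap.coe_comp, Set.image_comp]
  exact hT _ (hne.image S) (hdir.mono_comp (fun _ _ h => hSm h)) (hS A hne hdir hA)

lemma DecrToZero.map {p : ℕ → G} (hp : DecrToZero p) {A : G →ₗ[ℝ] G} (hAm : Monotone A)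
    (hA : OrderContinuousOp A) : DecrToZero (fun n => A (p n)) := by
  refine ⟨hAm.comp_antitone hp.1, ?_⟩
  have h := hA _ (Set.range_nonempty p) hp.1.directed_ge.directedOn_range hp.2
  rwa [← Set.range_comp] at h

lemma OrderConv.map {u : ℕ → G} {l : G} (h : OrderConv u l) {A : G →ₗ[ℝ] G} (hAm : Monotone A)
    (hA : OrderContinuousOp A) : OrderConv (fun n => A (u n)) (A l) := by
  obtain ⟨p, hp, hpu⟩ := h.exists_decrToZero
  exact of_decrToZero (hp.map hAm hA) fun n =>
    (map_sub A (u n) l ▸ abs_map_le hAm _).trans (hAm (hpu n))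

variable [AddLeftMono G]

lemma IsRieszHom.monotone {S : G →ₗ[ℝ] G} (hS : IsRieszHom S) : Monotone S :=
  (monotone_iff_map_nonneg S).2 fun x hx => by
    rw [← sup_of_le_left hx, hS, map_zero]
    exact le_sup_right

lemma IsCondExpOn.monotone {T : G →ₗ[ℝ] G} (hT : IsCondExpOn Set.univ T) : Monotone T :=
  (monotone_iff_map_nonneg T).2 fun x => hT.2.2.2.1 x trivial

end PositiveOperators

section Cesaro

variable {M : Type*} [AddCommGroup M] [Module ℝ M] (S : M →ₗ[ℝ] M)

lemma inv_natCast_smul_sum_range_const (a : M) (n : ℕ) :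
    ((n + 1 : ℕ) : ℝ)⁻¹ • ∑ _k ∈ range (n + 1), a = a := by
  rw [sum_const, card_range, ← Nat.cast_smul_eq_nsmul ℝ, inv_smul_smul₀ (by positivity)]

lemma ces_succ_of_map_eq_self {f : M} (hf : S f = f) (n : ℕ) : ces S f (n + 1) = f := by
  rw [ces, sum_congr rfl fun k _ => by rw [Module.End.pow_apply, Function.iterate_fixed hf],
    inv_natCast_smul_sum_range_const]

lemma map_ces_succ_of_comp_eq {T : M →ₗ[ℝ] M} (hTS : T ∘ₗ S = T) (f : M) (n : ℕ) :
    T (ces S f (n + 1)) = T f := by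
  have hT : ∀ k, T ((S ^ k) f) = T f := fun k => by
    induction k with
    | zero => rfl
    | succ k ih => rw [pow_succ', Module.End.mul_apply, ← LinearMap.comp_apply, hTS, ih]
  rw [ces, map_smul, map_sum, sum_congr rfl fun k _ => hT k, inv_natCast_smul_sum_range_const]

lemma map_ces_succ (f : M) (n : ℕ) :
    S (ces S f (n + 1)) = ces S f (n + 2) + ((n : ℝ) + 1)⁻¹ • (ces S f (n + 2) - f) := by
  have hsum : S (∑ k ∈ range (n + 1), (S ^ k) f) = ∑ k ∈ range (n + 2), (S ^ k) f - f := by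
    rw [map_sum, sum_range_succ' _ (n + 1), pow_zero, Module.End.one_apply, add_sub_cancel_right]
    exact sum_congr rfl fun k _ => by rw [pow_succ', Module.End.mul_apply]
  simp only [ces, map_smul, hsum]
  push_cast
  match_scalars
  · field_simp
    ring
  · field_simp

end Cesaro

section CesaroLimits

variable {G : Type*} [AddCommGroup G] [Lattice G] [AddLeftMono G] [Module ℝ G]

lemma orderConv_ces_of_map_eq_self {S : G →ₗ[ℝ] G} {f : G} (hf : S f = f) :
    OrderConv (ces S f) f :=
  OrderConv.of_comp_succ <| by simpa only [ces_succ_of_map_eq_self S hf] using OrderConv.const f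

lemma OrderConv.map_eq_of_comp_eq {T S : G →ₗ[ℝ] G} (hTm : Monotone T)
    (hT : OrderContinuousOp T) (hTS : T ∘ₗ S = T) {f l : G} (hl : OrderConv (ces S f) l) :
    T l = T f := by
  have h := hl.comp_succ.map hTm hT
  simp only [map_ces_succ_of_comp_eq S hTS] at h
  exact h.unique (OrderConv.const _)

variable [PosSMulMono ℝ G]

lemma DedekindCompleteIn.eq_zero_of_forall_abs_le_inv_smul
    (hDC : DedekindCompleteIn (Set.univ : Set G)) {x y : G}
    (h : ∀ n : ℕ, |x| ≤ ((n : ℝ) + 1)⁻¹ • y) : x = 0 := by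
  refine eq_zero_of_abs_nonpos
    (hDC.eq_zero_of_forall_nsmul_le (y := y) (abs_nonneg x) fun n => ?_).le
  calc n • |x| ≤ ((n : ℝ) + 1) • |x| := by
        rw [← Nat.cast_smul_eq_nsmul ℝ]
        exact smul_le_smul_of_nonneg_right (by linarith) (abs_nonneg x)
    _ ≤ y := by
        rw [← smul_inv_smul₀ (by positivity : (n : ℝ) + 1 ≠ 0) y]
        exact smul_le_smul_of_nonneg_left (h n) (by positivity)

lemma DecrToZero.inv_succ_smul (hDC : DedekindCompleteIn (Set.univ : Set G)) {M : G}
    (hM : 0 ≤ M) : DecrToZero (fun n : ℕ => ((n : ℝ) + 1)⁻¹ • M) := by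
  refine ⟨fun n m hnm => smul_le_smul_of_nonneg_right ?_ hM,
    Set.forall_mem_range.2 fun n => smul_nonneg (by positivity) hM, fun b hb => ?_⟩
  · gcongr
  · have hb0 : b⁺ = 0 := hDC.eq_zero_of_forall_abs_le_inv_smul fun n => by
      rw [abs_of_nonneg (posPart_nonneg b)]
      exact sup_le (hb ⟨n, rfl⟩) (smul_nonneg (by positivity) hM)
    exact hb0 ▸ le_posPart b

lemma OrderConv.inv_succ_smul (hDC : DedekindCompleteIn (Set.univ : Set G)) {v : ℕ → G}
    {M : G} (hv : ∀ n, |v n| ≤ M) : OrderConv (fun n => ((n : ℝ) + 1)⁻¹ • v n) 0 :=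
  of_decrToZero (DecrToZero.inv_succ_smul hDC ((abs_nonneg _).trans (hv 0))) fun n => by
    rw [sub_zero]
    exact (abs_smul_le_smul_abs (by positivity) _).trans
      (smul_le_smul_of_nonneg_left (hv n) (by positivity))

lemma OrderConv.map_eq_self_of_ces (hDC : DedekindCompleteIn (Set.univ : Set G))
    {S : G →ₗ[ℝ] G} (hSm : Monotone S) (hS : OrderContinuousOp S) {f l : G}
    (hl : OrderConv (ces S f) l) : S l = l := by
  obtain ⟨p, hp, hpl⟩ := hl.exists_decrToZero
  have hbdd : ∀ n, |ces S f (n + 2) - f| ≤ p 0 + |l - f| := fun n =>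
    calc |ces S f (n + 2) - f| ≤ |ces S f (n + 2) - l| + |l - f| := by
          simpa using abs_add_le (ces S f (n + 2) - l) (l - f)
      _ ≤ p 0 + |l - f| := add_le_add_left ((hpl _).trans (hp.1 (Nat.zero_le _))) _
  have hlim : OrderConv (fun n => S (ces S f (n + 1))) (l + 0) := by
    simp only [map_ces_succ]
    exact hl.comp_succ.comp_succ.add (OrderConv.inv_succ_smul hDC hbdd)
  exact ((hl.comp_succ.map hSm hS).unique hlim).trans (add_zero l)

end CesaroLimits


section LinearExtension

lemma apply_posPart_sub_apply_negPart {G H : Type*} [AddCommGroup G] [Lattice G]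
    [AddLeftMono G] [AddCommGroup H] {φ : G → H}
    (hadd : ∀ x y, 0 ≤ x → 0 ≤ y → φ (x + y) = φ x + φ y) {a b : G} (ha : 0 ≤ a) (hb : 0 ≤ b) :
    φ (a - b)⁺ - φ (a - b)⁻ = φ a - φ b := by
  have h : (a - b)⁺ + b = a + (a - b)⁻ :=
    sub_eq_sub_iff_add_eq_add.1 <| (posPart_sub_negPart (a - b)).trans <|
      sub_eq_sub_iff_add_eq_add.2 rfl
  have := congrArg φ h
  rw [hadd _ _ (posPart_nonneg _) hb, hadd _ _ ha (negPart_nonneg _)] at this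
  exact sub_eq_sub_iff_add_eq_add.2 this

variable {G H : Type*} [AddCommGroup G] [Lattice G] [AddLeftMono G] [Module ℝ G]
  [PosSMulMono ℝ G] [AddCommGroup H] [Module ℝ H]

/-- The Kantorovich extension of `φ` from the positive cone. -/
noncomputable def LinearMap.ofNonneg (φ : G → H)
    (hadd : ∀ x y, 0 ≤ x → 0 ≤ y → φ (x + y) = φ x + φ y)
    (hsmul : ∀ r : ℝ, 0 ≤ r → ∀ x, 0 ≤ x → φ (r • x) = r • φ x) : G →ₗ[ℝ] H where
  toFun x := φ x⁺ - φ x⁻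
  map_add' x y := by
    have hxy : x + y = (x⁺ + y⁺) - (x⁻ + y⁻) := by
      rw [add_sub_add_comm, posPart_sub_negPart, posPart_sub_negPart]
    rw [hxy, apply_posPart_sub_apply_negPart hadd (add_nonneg (posPart_nonneg x) (posPart_nonneg y))
      (add_nonneg (negPart_nonneg x) (negPart_nonneg y)), hadd _ _ (posPart_nonneg x)
      (posPart_nonneg y), hadd _ _ (negPart_nonneg x) (negPart_nonneg y)]
    abel
  map_smul' r x := by
    rcases le_total 0 r with hr | hr
    · have hrx : r • x = r • x⁺ - r • x⁻ := by rw [← smul_sub, posPart_sub_negPart]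
      rw [hrx, apply_posPart_sub_apply_negPart hadd (smul_nonneg hr (posPart_nonneg x))
        (smul_nonneg hr (negPart_nonneg x)), hsmul r hr _ (posPart_nonneg x),
        hsmul r hr _ (negPart_nonneg x), ← smul_sub, RingHom.id_apply]
    · have hr' : 0 ≤ -r := neg_nonneg.2 hr
      have hrx : r • x = (-r) • x⁻ - (-r) • x⁺ := by
        rw [← smul_sub, neg_smul, ← smul_neg, neg_sub, posPart_sub_negPart]
      rw [hrx, apply_posPart_sub_apply_negPart hadd (smul_nonneg hr' (negPart_nonneg x))
        (smul_nonneg hr' (posPart_nonneg x)), hsmul _ hr' _ (negPart_nonneg x),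
        hsmul _ hr' _ (posPart_nonneg x), ← smul_sub, RingHom.id_apply, neg_smul, ← smul_neg,
        neg_sub]

lemma LinearMap.ofNonneg_apply (φ : G → H) (hadd) (hsmul) (x : G) :
    LinearMap.ofNonneg φ hadd hsmul x = φ x⁺ - φ x⁻ :=
  rfl

lemma LinearMap.ofNonneg_apply_of_nonneg (φ : G → H) (hadd) (hsmul) {x : G} (hx : 0 ≤ x) :
    LinearMap.ofNonneg φ hadd hsmul x = φ x := by
  have hφ0 : φ 0 = 0 := by simpa using hsmul 0 le_rfl 0 le_rfl
  rw [ofNonneg_apply, posPart_eq_self.2 hx, negPart_eq_zero.2 hx, hφ0, sub_zero]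

end LinearExtension

section Truncations

variable {G : Type*} [AddCommGroup G] [Lattice G] [Module ℝ G]

def truncations (u x : G) : Set G := (fun t : ℝ => x ⊓ t • |u|) '' Set.Ici 0

lemma inf_smul_mem_truncations (u x : G) {t : ℝ} (ht : 0 ≤ t) :
    x ⊓ t • |u| ∈ truncations u x :=
  ⟨t, ht, rfl⟩

lemma self_mem_upperBounds_truncations (u x : G) : x ∈ upperBounds (truncations u x) := by
  rintro _ ⟨t, -, rfl⟩
  exact inf_le_left

variable [PosSMulMono ℝ G]

lemma smul_inf_of_pos {r : ℝ} (hr : 0 < r) (x y : G) : r • (x ⊓ y) = r • x ⊓ r • y :=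
  (OrderIso.smulRight hr).map_inf x y

lemma smul_image_truncations {r : ℝ} (hr : 0 < r) (u x : G) :
    (r • ·) '' truncations u x = truncations u (r • x) := by
  ext y
  simp only [truncations, Set.image_image, Set.mem_image, Set.mem_Ici]
  constructor
  · rintro ⟨t, ht, rfl⟩
    exact ⟨r * t, by positivity, by rw [smul_inf_of_pos hr, mul_smul]⟩
  · rintro ⟨t, ht, rfl⟩
    refine ⟨r⁻¹ * t, by positivity, ?_⟩
    rw [smul_inf_of_pos hr, mul_smul, smul_inv_smul₀ hr.ne']

end Truncations

section BandProjection

variable {G : Type*} [AddCommGroup G] [Lattice G] [Module ℝ G]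
  (hDC : DedekindCompleteIn (Set.univ : Set G))

/-- For `x ≥ 0`, the component of `x` in the band generated by `u`. -/
noncomputable def bandComponent (u x : G) : G :=
  (hDC.exists_isLUB ⟨_, inf_smul_mem_truncations u x le_rfl⟩
    ⟨x, self_mem_upperBounds_truncations u x⟩).choose

lemma isLUB_bandComponent (u x : G) : IsLUB (truncations u x) (bandComponent hDC u x) :=
  (hDC.exists_isLUB ⟨_, inf_smul_mem_truncations u x le_rfl⟩
    ⟨x, self_mem_upperBounds_truncations u x⟩).choose_spec

variable {u x y : G}

lemma bandComponent_le_self : bandComponent hDC u x ≤ x :=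
  (isLUB_bandComponent hDC u x).2 (self_mem_upperBounds_truncations u x)

lemma inf_smul_le_bandComponent {t : ℝ} (ht : 0 ≤ t) : x ⊓ t • |u| ≤ bandComponent hDC u x :=
  (isLUB_bandComponent hDC u x).1 (inf_smul_mem_truncations u x ht)

lemma bandComponent_le_of_forall {b : G} (h : ∀ t : ℝ, 0 ≤ t → x ⊓ t • |u| ≤ b) :
    bandComponent hDC u x ≤ b :=
  (isLUB_bandComponent hDC u x).2 <| by
    rintro _ ⟨t, ht, rfl⟩
    exact h t ht

lemma bandComponent_nonneg (hx : 0 ≤ x) : 0 ≤ bandComponent hDC u x := by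
  simpa [inf_of_le_right hx] using inf_smul_le_bandComponent hDC (u := u) (x := x) le_rfl

lemma bandComponent_zero : bandComponent hDC u 0 = 0 :=
  le_antisymm (bandComponent_le_self hDC) (bandComponent_nonneg hDC le_rfl)

lemma bandComponent_bandComponent : bandComponent hDC u (bandComponent hDC u x) =
    bandComponent hDC u x :=
  le_antisymm (bandComponent_le_self hDC) <| bandComponent_le_of_forall hDC fun _ ht =>
    (le_inf (inf_smul_le_bandComponent hDC ht) inf_le_right).trans
      (inf_smul_le_bandComponent hDC ht)

lemma bandComponent_smul [PosSMulMono ℝ G] {r : ℝ} (hr : 0 ≤ r) (x : G) :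
    bandComponent hDC u (r • x) = r • bandComponent hDC u x := by
  rcases hr.eq_or_lt with rfl | hr
  · simp [bandComponent_zero]
  · refine (isLUB_bandComponent hDC u (r • x)).unique ?_
    rw [← smul_image_truncations hr]
    exact (OrderIso.smulRight hr).isLUB_image'.2 (isLUB_bandComponent hDC u x)

variable [AddLeftMono G]

lemma bandComponent_self (hu : 0 ≤ u) : bandComponent hDC u u = u :=
  le_antisymm (bandComponent_le_self hDC) <| by
    simpa [abs_of_nonneg hu] using inf_smul_le_bandComponent hDC (u := u) (x := u) zero_le_one

variable [PosSMulMono ℝ G]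

lemma bandComponent_add (hx : 0 ≤ x) (hy : 0 ≤ y) :
    bandComponent hDC u (x + y) = bandComponent hDC u x + bandComponent hDC u y := by
  refine le_antisymm (bandComponent_le_of_forall hDC fun t ht => ?_) ?_
  · exact (inf_add_le_add_inf hx hy (smul_nonneg ht (abs_nonneg u))).trans
      (add_le_add (inf_smul_le_bandComponent hDC ht) (inf_smul_le_bandComponent hDC ht))
  · rw [← le_sub_iff_add_le]
    refine bandComponent_le_of_forall hDC fun s hs => ?_
    rw [le_sub_iff_add_le', ← le_sub_iff_add_le]
    refine bandComponent_le_of_forall hDC fun t ht => ?_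
    rw [le_sub_iff_add_le']
    refine le_trans ?_ (inf_smul_le_bandComponent hDC (add_nonneg hs ht))
    rw [add_smul]
    exact le_inf (add_le_add inf_le_left inf_le_left) (add_le_add inf_le_right inf_le_right)

lemma bandComponent_eq_zero_of_inf_eq_zero (hx : 0 ≤ x) (hxu : x ⊓ |u| = 0) :
    bandComponent hDC u x = 0 := by
  refine le_antisymm (bandComponent_le_of_forall hDC fun t ht => ?_) (bandComponent_nonneg hDC hx)
  have h1 : (1 : ℝ) ≤ t + 1 := by linarith
  calc x ⊓ t • |u| ≤ (t + 1) • x ⊓ (t + 1) • |u| :=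
        inf_le_inf (by simpa using smul_le_smul_of_nonneg_right h1 hx)
          (smul_le_smul_of_nonneg_right (by linarith) (abs_nonneg u))
    _ = 0 := by rw [← smul_inf_of_pos (by linarith), hxu, smul_zero]

noncomputable def bandProj (u : G) : G →ₗ[ℝ] G :=
  LinearMap.ofNonneg (bandComponent hDC u) (fun _ _ => bandComponent_add hDC)
    (fun _ hr x _ => bandComponent_smul hDC hr x)

lemma bandProj_apply (x : G) :
    bandProj hDC u x = bandComponent hDC u x⁺ - bandComponent hDC u x⁻ :=
  rfl

lemma bandProj_apply_of_nonneg (hx : 0 ≤ x) : bandProj hDC u x = bandComponent hDC u x :=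
  LinearMap.ofNonneg_apply_of_nonneg _ _ _ hx

lemma isBandProjection_bandProj (u : G) : IsBandProjection (bandProj hDC u) := by
  refine ⟨fun x => ?_, fun x hx => ?_⟩
  · rw [bandProj_apply hDC (u := u) x, map_sub,
      bandProj_apply_of_nonneg hDC (bandComponent_nonneg hDC (posPart_nonneg x)),
      bandProj_apply_of_nonneg hDC (bandComponent_nonneg hDC (negPart_nonneg x)),
      bandComponent_bandComponent, bandComponent_bandComponent]
  · rw [bandProj_apply_of_nonneg hDC hx]
    exact ⟨bandComponent_nonneg hDC hx, bandComponent_le_self hDC⟩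

lemma monotone_bandProj (u : G) : Monotone (bandProj hDC u) :=
  (monotone_iff_map_nonneg _).2 fun _ hx => ((isBandProjection_bandProj hDC u).2 _ hx).1

lemma bandProj_posPart_le_sub (g a : G) :
    bandProj hDC g⁺ a ≤ (g + a)⁺ - g⁺ := by
  have hg : bandProj hDC g⁺ g = g⁺ := by
    rw [bandProj_apply, bandComponent_self hDC (posPart_nonneg g),
      bandComponent_eq_zero_of_inf_eq_zero hDC (negPart_nonneg g)
        (by rw [abs_of_nonneg (posPart_nonneg g), inf_comm, posPart_inf_negPart_eq_zero]),
      sub_zero]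
  rw [le_sub_iff_add_le']
  calc g⁺ + bandProj hDC g⁺ a = bandProj hDC g⁺ (g + a) := by rw [map_add, hg]
    _ ≤ bandProj hDC g⁺ (g + a)⁺ := monotone_bandProj hDC _ (le_posPart _)
    _ ≤ (g + a)⁺ := ((isBandProjection_bandProj hDC _).2 _ (posPart_nonneg _)).2

lemma posPart_add_sub_le_bandProj (g : G) {a : G} (ha : 0 ≤ a) :
    (g + a)⁺ - g⁺ ≤ bandProj hDC (g + a)⁺ a := by
  set P := bandProj hDC (g + a)⁺
  have hP : P (g + a)⁺ = (g + a)⁺ := by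
    rw [bandProj_apply_of_nonneg hDC (posPart_nonneg _), bandComponent_self hDC (posPart_nonneg _)]
  have hle : (g + a)⁺ - g⁺ ≤ a := sub_le_iff_le_add'.2 <|
    sup_le (add_le_add (le_posPart g) le_rfl) (add_nonneg (posPart_nonneg g) ha)
  calc (g + a)⁺ - g⁺ ≤ P ((g + a)⁺ - g⁺) := by
        rw [map_sub, hP]
        exact sub_le_sub_left ((isBandProjection_bandProj hDC _).2 _ (posPart_nonneg g)).2 _
    _ ≤ P a := monotone_bandProj hDC _ hle

end BandProjection

section InvarianceOfBandProjections

variable {G : Type*} [AddCommGroup G] [Lattice G] [AddLeftMono G] [Module ℝ G] [PosSMulMono ℝ G]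
  {Φ Ψ : G →ₗ[ℝ] G} {e : G}

lemma exists_span_bandProjection_sandwich (hDC : DedekindCompleteIn (Set.univ : Set G))
    (he : 0 ≤ e) {f : G} (hf0 : 0 ≤ f) (hfe : f ≤ e) (n : ℕ) :
    ∃ A ∈ Submodule.span ℝ {x | ∃ P, IsBandProjection P ∧ P e = x},
    ∃ B ∈ Submodule.span ℝ {x | ∃ P, IsBandProjection P ∧ P e = x},
      A ≤ f ∧ f ≤ B ∧ B - A ≤ ((n : ℝ) + 1)⁻¹ • e := by
  -- With `δ = 1 / (n + 1)`, the steps of `u k = (f - (k δ) • e)⁺` from `u 0 = f` down to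
  -- `u (n + 1) = 0` lie between `δ • P (k + 1) e` and `δ • P k e`, `P k` the band projection
  -- generated by `u k`.
  set δ : ℝ := ((n : ℝ) + 1)⁻¹
  have hδ : 0 ≤ δ := by positivity
  set u : ℕ → G := fun k => (f - ((k : ℝ) * δ) • e)⁺
  set Q : ℕ → G := fun k => δ • bandProj hDC (u k) e
  have hu : ∀ k : ℕ, f - ((k : ℝ) * δ) • e = (f - (((k + 1 : ℕ) : ℝ) * δ) • e) + δ • e :=
    fun k => by
      push_cast
      rw [add_mul, one_mul, add_smul]
      abel
  have hlow : ∀ k : ℕ, Q (k + 1) ≤ u k - u (k + 1) := fun k => by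
    simpa only [Q, u, ← hu, map_smul] using
      bandProj_posPart_le_sub hDC (f - (((k + 1 : ℕ) : ℝ) * δ) • e) (δ • e)
  have hhigh : ∀ k : ℕ, u k - u (k + 1) ≤ Q k := fun k => by
    simpa only [Q, u, ← hu, map_smul] using
      posPart_add_sub_le_bandProj hDC (f - (((k + 1 : ℕ) : ℝ) * δ) • e) (smul_nonneg hδ he)
  have htel : ∑ k ∈ range (n + 1), (u k - u (k + 1)) = f := by
    have hn : ((n + 1 : ℕ) : ℝ) * δ = 1 := by push_cast; exact mul_inv_cancel₀ (by positivity)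
    rw [sum_range_sub']
    simp only [u, hn, Nat.cast_zero, zero_mul, zero_smul, sub_zero, one_smul,
      posPart_eq_self.2 hf0, posPart_eq_zero.2 (sub_nonpos.2 hfe)]
  have hQ : ∀ k, Q k ∈ Submodule.span ℝ {x | ∃ P, IsBandProjection P ∧ P e = x} := fun k =>
    Submodule.smul_mem _ _ (Submodule.subset_span ⟨_, isBandProjection_bandProj hDC _, rfl⟩)
  refine ⟨∑ k ∈ range (n + 1), Q (k + 1), Submodule.sum_mem _ fun k _ => hQ (k + 1),
    ∑ k ∈ range (n + 1), Q k, Submodule.sum_mem _ fun k _ => hQ k,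
    htel ▸ sum_le_sum fun k _ => hlow k, htel ▸ sum_le_sum fun k _ => hhigh k, ?_⟩
  rw [← sum_sub_distrib, sum_range_sub']
  exact (sub_le_self _ (smul_nonneg hδ ((isBandProjection_bandProj hDC _).2 e he).1)).trans
    (smul_le_smul_of_nonneg_left ((isBandProjection_bandProj hDC _).2 e he).2 hδ)

lemma abs_sub_le_of_map_bandProjection_eq (hDC : DedekindCompleteIn (Set.univ : Set G))
    (hΦ : Monotone Φ) (hΨ : Monotone Ψ) (he : 0 ≤ e)
    (hΦΨ : ∀ P, IsBandProjection P → Φ (P e) = Ψ (P e)) {f : G} (hf0 : 0 ≤ f) (hfe : f ≤ e)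
    (n : ℕ) : |Φ f - Ψ f| ≤ ((n : ℝ) + 1)⁻¹ • Ψ e := by
  obtain ⟨A, hA, B, hB, hAf, hfB, hBA⟩ := exists_span_bandProjection_sandwich hDC he hf0 hfe n
  have hspan := LinearMap.eqOn_span' (R := ℝ) (f := Φ) (g := Ψ)
    (s := {x | ∃ P, IsBandProjection P ∧ P e = x}) (by rintro _ ⟨P, hP, rfl⟩; exact hΦΨ P hP)
  have hΨBA : Ψ B - Ψ A ≤ ((n : ℝ) + 1)⁻¹ • Ψ e := by
    rw [← map_sub, ← map_smul]
    exact hΨ hBA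
  refine abs_le'.2 ⟨?_, ?_⟩
  · calc Φ f - Ψ f ≤ Φ B - Ψ A := sub_le_sub (hΦ hfB) (hΨ hAf)
      _ = Ψ B - Ψ A := by rw [hspan hB]
      _ ≤ _ := hΨBA
  · calc -(Φ f - Ψ f) = Ψ f - Φ f := neg_sub _ _
      _ ≤ Ψ B - Φ A := sub_le_sub (hΨ hfB) (hΦ hAf)
      _ = Ψ B - Ψ A := by rw [hspan hA]
      _ ≤ _ := hΨBA

lemma eqOn_Icc_of_map_bandProjection_eq (hDC : DedekindCompleteIn (Set.univ : Set G))
    (hΦ : Monotone Φ) (hΨ : Monotone Ψ) (he : 0 ≤ e)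
    (hΦΨ : ∀ P, IsBandProjection P → Φ (P e) = Ψ (P e)) : Set.EqOn Φ Ψ (Set.Icc 0 e) :=
  fun _ hf => sub_eq_zero.1 <| hDC.eq_zero_of_forall_abs_le_inv_smul <|
    abs_sub_le_of_map_bandProjection_eq hDC hΦ hΨ he hΦΨ hf.1 hf.2

lemma eq_of_eqOn_Icc (hDC : DedekindCompleteIn (Set.univ : Set G))
    (he : IsWeakOrderUnitIn Set.univ e) (hΦm : Monotone Φ) (hΨm : Monotone Ψ)
    (hΦ : OrderContinuousOp Φ) (hΨ : OrderContinuousOp Ψ) (h : Set.EqOn Φ Ψ (Set.Icc 0 e)) :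
    Φ = Ψ := by
  have htrunc : ∀ f : G, 0 ≤ f → ∀ m : ℕ, Φ (f ⊓ m • e) = Ψ (f ⊓ m • e) := by
    rintro f hf (_ | m)
    · simp [inf_of_le_right hf]
    · set r : ℝ := ((m + 1 : ℕ) : ℝ)
      have hr : 0 < r := by positivity
      have hf' : f ⊓ (m + 1) • e = r • (r⁻¹ • f ⊓ e) := by
        rw [smul_inf_of_pos hr, smul_inv_smul₀ hr.ne', Nat.cast_smul_eq_nsmul]
      rw [hf', map_smul, map_smul,
        h ⟨le_inf (smul_nonneg (by positivity) hf) he.1.le, inf_le_right⟩]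
  have hpos : ∀ f : G, 0 ≤ f → Φ f = Ψ f := by
    intro f hf
    have hd := DecrToZero.sub_inf_nsmul hDC he hf
    refine sub_eq_zero.1 <| ((hd.map hΦm hΦ).add (hd.map hΨm hΨ)).eq_zero fun m => ?_
    have hdm : 0 ≤ f - f ⊓ m • e := sub_nonneg.2 inf_le_left
    calc |Φ f - Ψ f| = |Φ (f - f ⊓ m • e) - Ψ (f - f ⊓ m • e)| := by
          rw [map_sub, map_sub, htrunc f hf m, sub_sub_sub_cancel_right]
      _ ≤ Φ (f - f ⊓ m • e) + Ψ (f - f ⊓ m • e) :=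
          abs_sub_le_add_of_nonneg ((monotone_iff_map_nonneg Φ).1 hΦm _ hdm)
            ((monotone_iff_map_nonneg Ψ).1 hΨm _ hdm)
  ext f
  rw [← posPart_sub_negPart f, map_sub, map_sub, hpos _ (posPart_nonneg f),
    hpos _ (negPart_nonneg f)]

end InvarianceOfBandProjections

lemma IsCEPS.comp_eq {T S : E →ₗ[ℝ] E} {e : E} (h : IsCEPS T S e) : T ∘ₗ S = T := by
  obtain ⟨hDC, he, hT, -, hS, hSoc, -, hP⟩ := h
  have hTS : Monotone (T ∘ₗ S) := hT.monotone.comp hS.monotone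
  exact eq_of_eqOn_Icc hDC he hTS hT.monotone (hT.orderContinuousOp.comp hS.monotone hSoc)
    hT.orderContinuousOp (eqOn_Icc_of_map_bandProjection_eq hDC hTS hT.monotone he.1.le hP)

/-- Corollary 3.4: with `E = 𝓔_S`, the system `(E,T,S,e)` is ergodic iff `T = L_S`. -/
theorem ergodic_iff_T_eq_LS (T S : E →ₗ[ℝ] E) (e : E) (h : IsCEPS T S e)
    (L : E → E) (hL : ∀ f, OrderConv (ces S f) (L f)) :
    IsErgodic T S e ↔ ∀ f, T f = L f := by
  have hTS := h.comp_eq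
  obtain ⟨hDC, -, hT, -, hS, hSoc, -, -⟩ := h
  constructor
  · intro hErg f
    have hSL : S (L f) = L f := (hL f).map_eq_self_of_ces hDC hS.monotone hSoc
    obtain ⟨g, hg⟩ := hErg (L f) (L f) hSL (orderConv_ces_of_map_eq_self hSL)
    calc T f = T (L f) := ((hL f).map_eq_of_comp_eq hT.monotone hT.orderContinuousOp hTS).symm
      _ = L f := by rw [← hg, hT.map_idem]
  · rintro hTL f l - hl
    exact ⟨f, (hTL f).trans ((hL f).unique hl)⟩
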